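/- arXiv:2604.19568 — 2 statements merged into one kernel-verified Lean document; each statement's English description precedes it below -/
import Mathlib

section
/- Let Ω ⊆ ℝ³ be a nonempty closed set bounded inside a compact set K, and let (pₙ) be a sequence of points in K that is dense in K, with dₙ = dist(pₙ, Ω). Define Uₙ = K \ ⋃_{i≤n} B(pᵢ, dᵢ). Then Uₙ converges to Ω ∩ K in two-sided Hausdorff distance as n → ∞. -/
open Metric Filter

theorem stmt3 (Ω K : Set (EuclideanSpace ℝ (Fin 3))) (hΩ : Ω.Nonempty)
    (hΩc : IsClosed Ω) (hΩK : Ω ⊆ K) (hK : IsCompact K)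
    (p : ℕ → EuclideanSpace ℝ (Fin 3)) (hpK : ∀ i, p i ∈ K)
    (hdense : K ⊆ closure (Set.range p))
    (d : ℕ → ℝ) (hd : ∀ i, d i = Metric.infDist (p i) Ω)
    (U : ℕ → Set (EuclideanSpace ℝ (Fin 3)))
    (hU : ∀ n, U n = K \ ⋃ i ≤ n, Metric.ball (p i) (d i)) :
    Tendsto (fun n => Metric.hausdorffDist (U n) (Ω ∩ K)) atTop (nhds 0) := by
  have hΩK' : Ω ∩ K = Ω := Set.inter_eq_left.mpr hΩK
  -- Ω ⊆ U n for all n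
  have hΩU : ∀ n, Ω ⊆ U n := by
    intro n x hx
    rw [hU n]
    refine ⟨hΩK hx, ?_⟩
    simp only [Set.mem_iUnion, Metric.mem_ball, not_exists]
    intro i _
    rw [hd i, not_lt, dist_comm]
    exact Metric.infDist_le_dist_of_mem hx
  rw [Metric.tendsto_atTop]
  intro ε hε
  -- the "bad" set
  set S : Set (EuclideanSpace ℝ (Fin 3)) :=
    {x | x ∈ K ∧ ε / 2 ≤ Metric.infDist x Ω} with hS
  have hScompact : IsCompact S := by
    apply hK.of_isClosed_subset
    · have : S = K ∩ (fun x => Metric.infDist x Ω) ⁻¹' (Set.Ici (ε / 2)) := by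
        ext x; simp [hS, Set.mem_preimage]
      rw [this]
      exact hK.isClosed.inter (isClosed_Ici.preimage (Metric.continuous_infDist_pt Ω))
    · intro x hx; exact hx.1
  have hScover : S ⊆ ⋃ i : ℕ, Metric.ball (p i) (d i) := by
    intro x hx
    obtain ⟨y, ⟨i, rfl⟩, hyd⟩ := Metric.mem_closure_iff.mp (hdense hx.1) (ε / 4) (by linarith)
    have h1 : Metric.infDist x Ω ≤ Metric.infDist (p i) Ω + dist x (p i) :=
      Metric.infDist_le_infDist_add_dist
    have : dist (p i) x < d i := by
      rw [hd i, dist_comm]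
      have := hx.2
      linarith
    exact Set.mem_iUnion.mpr ⟨i, Metric.mem_ball'.mpr this⟩
  obtain ⟨t, ht⟩ := hScompact.elim_finite_subcover _
    (fun i => Metric.isOpen_ball) hScover
  refine ⟨t.sup id, fun n hn => ?_⟩
  have hUS : ∀ x ∈ U n, Metric.infDist x Ω < ε / 2 := by
    intro x hx
    by_contra h
    push_neg at h
    rw [hU n] at hx
    have hxS : x ∈ S := ⟨hx.1, h⟩
    obtain ⟨i, hit, hxi⟩ := Set.mem_iUnion₂.mp (ht hxS)
    exact hx.2 (Set.mem_iUnion₂.mpr ⟨i, le_trans (Finset.le_sup (f := id) hit) hn, hxi⟩)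
  have hle : Metric.hausdorffDist (U n) (Ω ∩ K) ≤ ε / 2 := by
    rw [hΩK']
    apply Metric.hausdorffDist_le_of_infDist (by linarith)
    · intro x hx; exact le_of_lt (hUS x hx)
    · intro x hx
      have : Metric.infDist x (U n) = 0 :=
        Metric.infDist_zero_of_mem (hΩU n hx)
      linarith
  have hnonneg : 0 ≤ Metric.hausdorffDist (U n) (Ω ∩ K) := Metric.hausdorffDist_nonneg
  rw [Real.dist_eq, sub_zero, abs_of_nonneg hnonneg]
  linarith
end

section
/- Theorem (power contour ⊆ superpower contour, pointwise version): Let (p₁, s₁), …, (pₙ, sₙ) be signed distance samples to a nonempty closed surface Ω (|sᵢ| = dist(pᵢ, Ω), and samples of opposite sign have ‖pᵢ − pⱼ‖ ≥ |sᵢ| + |sⱼ|). Let x be a point with πᵢ(x) = πⱼ(x) ≤ π_k(x) for all k, for some pair i, j with sᵢ·sⱼ < 0, where π_k(x) = ‖x − p_k‖² − s_k². Then x is not contained in any open ball B(p_k, |s_k|), k = 1, …, n. -/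
open Metric

theorem stmt10 {n : ℕ} (Ω : Set (EuclideanSpace ℝ (Fin 3))) (hΩ : Ω.Nonempty)
    (hΩc : IsClosed Ω)
    (p : Fin n → EuclideanSpace ℝ (Fin 3)) (s : Fin n → ℝ)
    (hs : ∀ i, |s i| = Metric.infDist (p i) Ω)
    (hopp : ∀ i j, s i * s j < 0 → dist (p i) (p j) ≥ |s i| + |s j|)
    (x : EuclideanSpace ℝ (Fin 3)) (i j : Fin n) (hij : s i * s j < 0)
    (heq : ‖x - p i‖ ^ 2 - s i ^ 2 = ‖x - p j‖ ^ 2 - s j ^ 2)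
    (hmin : ∀ k, ‖x - p i‖ ^ 2 - s i ^ 2 ≤ ‖x - p k‖ ^ 2 - s k ^ 2) :
    ∀ k, x ∉ Metric.ball (p k) |s k| := by
  have hP : 0 ≤ ‖x - p i‖ ^ 2 - s i ^ 2 := by
    by_contra h
    push_neg at h
    have hi : ‖x - p i‖ < |s i| := by
      nlinarith [norm_nonneg (x - p i), abs_nonneg (s i), sq_abs (s i)]
    have hj : ‖x - p j‖ < |s j| := by
      nlinarith [norm_nonneg (x - p j), abs_nonneg (s j), sq_abs (s j)]
    have htri : dist (p i) (p j) ≤ ‖x - p i‖ + ‖x - p j‖ := by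
      have := dist_triangle (p i) x (p j)
      simpa [dist_eq_norm, norm_sub_rev] using this
    have := hopp i j hij
    linarith
  intro k hk
  rw [Metric.mem_ball, dist_eq_norm] at hk
  have := hmin k
  nlinarith [norm_nonneg (x - p k), abs_nonneg (s k), sq_abs (s k)]
end
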